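/- arXiv:1611.00724 — 5 statements merged into one kernel-verified Lean document; each statement's English description precedes it below -/
import Mathlib

section
/- Let f : ℝⁿ → ℝ be convex and locally K-Lipschitz about z with radius σ > 0, and let r > 0 satisfy 2K/r < σ. Then ‖Prox_f^r(z) − z‖ < 2K/r. -/
/-!
Testing the minimality of `p` against the midpoint of `z` and `p` and using convexity gives
`f z - f p ≥ (3/4) r ‖p - z‖²`. On the other hand, the Lipschitz bound near `z` propagates along
the segment from `z` to `p` by convexity, so `f z - f p ≤ K ‖p - z‖`. Together,
`‖p - z‖ ≤ 4K / (3r) < 2K / r`.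
-/

open scoped RealInnerProductSpace

open Metric

variable {E : Type*} [NormedAddCommGroup E] [NormedSpace ℝ E] {f : E → ℝ}

theorem ConvexOn.le_add_mul_norm_sub_of_ball {K σ : ℝ} {z : E} (hf : ConvexOn ℝ Set.univ f)
    (hσ : 0 < σ) (hloc : ∀ x ∈ ball z σ, f z ≤ f x + K * ‖x - z‖) (p : E) :
    f z ≤ f p + K * ‖p - z‖ := by
  set d := ‖p - z‖
  have hd : 0 ≤ d := norm_nonneg _
  -- this `t` puts `w` in the ball without a case split on whether `p` is in it
  set t := σ / (σ + 2 * d)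
  have ht0 : 0 < t := by positivity
  have ht1 : t ≤ 1 := (div_le_one (by positivity)).2 (by linarith)
  have htd : t * d < σ := by
    rw [div_mul_eq_mul_div, div_lt_iff₀ (by positivity)]
    nlinarith
  set w := (1 - t) • z + t • p
  have hwz : w - z = t • (p - z) := by module
  have hw_norm : ‖w - z‖ = t * d := by rw [hwz, norm_smul, Real.norm_of_nonneg ht0.le]
  have hw_ball : w ∈ ball z σ := by rwa [mem_ball, dist_eq_norm, hw_norm]
  have hw_conv : f w ≤ (1 - t) * f z + t * f p :=
    hf.2 (Set.mem_univ z) (Set.mem_univ p) (by linarith) ht0.le (by ring)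
  have h := hloc w hw_ball
  rw [hw_norm] at h
  have : t * f z ≤ t * (f p + K * d) := by linarith
  exact le_of_mul_le_mul_left this ht0

theorem ConvexOn.mul_sq_norm_le_sub_of_isMinOn {r : ℝ} {z p : E} (hf : ConvexOn ℝ Set.univ f)
    (hp : IsMinOn (fun y ↦ f y + r / 2 * ‖y - z‖ ^ 2) Set.univ p) :
    3 / 4 * r * ‖p - z‖ ^ 2 ≤ f z - f p := by
  set y := (1 / 2 : ℝ) • z + (1 / 2 : ℝ) • p
  have hyz : ‖y - z‖ = ‖p - z‖ / 2 := by
    rw [show y - z = (1 / 2 : ℝ) • (p - z) by module, norm_smul,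
      Real.norm_of_nonneg (by norm_num)]
    ring
  have hy_conv : f y ≤ 1 / 2 * f z + 1 / 2 * f p :=
    hf.2 (Set.mem_univ z) (Set.mem_univ p) (by norm_num) (by norm_num) (by norm_num)
  have h := hp (Set.mem_univ y)
  simp only [Set.mem_ofPred_eq, hyz] at h
  nlinarith

theorem prox_dist_lt_general (n : ℕ) (f : EuclideanSpace ℝ (Fin n) → ℝ)
    (hf : ConvexOn ℝ Set.univ f) (K r σ : ℝ) (hK : 0 < K) (hr : 0 < r) (hσ : 0 < σ)
    (z : EuclideanSpace ℝ (Fin n))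
    (hLip : ∀ x ∈ Metric.ball z σ, ∀ y ∈ Metric.ball z σ, |f x - f y| ≤ K * ‖x - y‖)
    (p : EuclideanSpace ℝ (Fin n))
    (hp : ∀ y, f p + r / 2 * ‖p - z‖ ^ 2 ≤ f y + r / 2 * ‖y - z‖ ^ 2) :
    ‖p - z‖ < 2 * K / r := by
  have hslope : f z - f p ≤ K * ‖p - z‖ := by
    have := hf.le_add_mul_norm_sub_of_ball (K := K) hσ (fun x hx ↦ by
      linarith [neg_abs_le (f x - f z), hLip x hx z (mem_ball_self hσ)]) p
    linarith
  have hprox := hf.mul_sq_norm_le_sub_of_isMinOn (fun y _ ↦ hp y)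
  rw [lt_div_iff₀ hr]
  nlinarith [norm_nonneg (p - z)]

theorem prox_dist_lt (n : ℕ) (f : EuclideanSpace ℝ (Fin n) → ℝ)
    (hf : ConvexOn ℝ Set.univ f) (K r σ : ℝ) (hK : 0 < K) (hr : 0 < r) (hσ : 0 < σ)
    (z : EuclideanSpace ℝ (Fin n))
    (hLip : ∀ x ∈ Metric.ball z σ, ∀ y ∈ Metric.ball z σ, |f x - f y| ≤ K * ‖x - y‖)
    (hrσ : 2 * K / r < σ)
    (p : EuclideanSpace ℝ (Fin n))
    (hp : ∀ y, f p + r / 2 * ‖p - z‖ ^ 2 ≤ f y + r / 2 * ‖y - z‖ ^ 2) :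
    ‖p - z‖ < 2 * K / r :=
  prox_dist_lt_general n f hf K r σ hK hr hσ z hLip p hp
end

section
/- Let f : ℝⁿ → ℝ be convex, and let x_k, z ∈ ℝⁿ with x_k ≠ z. Suppose g̃ ∈ ℝⁿ satisfies dist(g̃, ∂f(x_k)) < ε, and define g := g̃ − c_k where c_k = E_k(z − x_k)/‖z − x_k‖² with E_k := f(x_k) + g̃ᵀ(z − x_k) − f(z) > 0. Then dist(g, ∂f(x_k)) < ε. -/
/-!
Every subgradient `s` of `f` at `xk` satisfies `⟪s, z - xk⟫ ≤ f z - f xk = ⟪gt, z - xk⟫ - Ek`, so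
the subdifferential lies in a half-space that `gt` violates by `Ek`, and `g` is the projection of `gt`
onto that half-space. Projecting onto a half-space moves a point closer to every point of the
half-space, hence closer to every subgradient, and the distance to the subdifferential can only drop.
-/

open scoped RealInnerProductSpace

theorem Metric.infDist_le_infDist_of_forall_dist_le {α : Type*} [PseudoMetricSpace α] {a b : α}
    {S : Set α} (h : ∀ s ∈ S, dist a s ≤ dist b s) : infDist a S ≤ infDist b S := by
  rcases S.eq_empty_or_nonempty with rfl | hS
  · simp
  · exact (le_infDist hS).2 fun s hs => (infDist_le_dist_of_mem hs).trans (h s hs)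

section HalfSpace

variable {E : Type*} [NormedAddCommGroup E] [InnerProductSpace ℝ E]

theorem norm_sub_smul_le_norm {w v : E} {t : ℝ} (ht : 0 ≤ t) (h : t * ‖v‖ ^ 2 ≤ 2 * ⟪w, v⟫) :
    ‖w - t • v‖ ≤ ‖w‖ := by
  have hsq : ‖w - t • v‖ ^ 2 ≤ ‖w‖ ^ 2 := by
    rw [norm_sub_sq_real, real_inner_smul_right, norm_smul, Real.norm_of_nonneg ht]
    nlinarith [mul_le_mul_of_nonneg_left h ht]
  exact pow_le_pow_iff_left₀ (norm_nonneg _) (norm_nonneg _) two_ne_zero |>.1 hsq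

/-- `a - (c / ‖v‖ ^ 2) • v` is the projection of `a` onto the half-space `{s | ⟪s, v⟫ ≤ ⟪a, v⟫ - c}`
(for `v = 0` the coefficient is `0` by the convention `c / 0 = 0`). -/
theorem dist_sub_div_norm_sq_smul_le {a s v : E} {c : ℝ} (hc : 0 ≤ c) (hs : ⟪s, v⟫ + c ≤ ⟪a, v⟫) :
    dist (a - (c / ‖v‖ ^ 2) • v) s ≤ dist a s := by
  have hcoef : c / ‖v‖ ^ 2 * ‖v‖ ^ 2 ≤ c := by
    rcases eq_or_ne v 0 with rfl | hv
    · simpa using hc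
    · rw [div_mul_cancel₀ _ (by positivity)]
  have hinner : c ≤ ⟪a - s, v⟫ := by rw [inner_sub_left]; linarith
  rw [dist_eq_norm, dist_eq_norm, sub_right_comm]
  exact norm_sub_smul_le_norm (by positivity) (by linarith)

end HalfSpace

theorem corrected_subgradient_close_general (n : ℕ) (f : EuclideanSpace ℝ (Fin n) → ℝ)
    (xk z : EuclideanSpace ℝ (Fin n))
    (ε : ℝ) (gt : EuclideanSpace ℝ (Fin n))
    (hdist : Metric.infDist gt {g : EuclideanSpace ℝ (Fin n) | ∀ y, f y ≥ f xk + ⟪g, y - xk⟫} < ε)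
    (Ek : ℝ) (hEk : Ek = f xk + ⟪gt, z - xk⟫ - f z) (hEkpos : 0 < Ek)
    (g : EuclideanSpace ℝ (Fin n)) (hg : g = gt - (Ek / ‖z - xk‖ ^ 2) • (z - xk)) :
    Metric.infDist g {g : EuclideanSpace ℝ (Fin n) | ∀ y, f y ≥ f xk + ⟪g, y - xk⟫} < ε := by
  refine lt_of_le_of_lt (Metric.infDist_le_infDist_of_forall_dist_le fun s hs => ?_) hdist
  have hs_halfspace : ⟪s, z - xk⟫ + Ek ≤ ⟪gt, z - xk⟫ := by linarith [hs z]
  rw [hg]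
  exact dist_sub_div_norm_sq_smul_le hEkpos.le hs_halfspace

theorem corrected_subgradient_close (n : ℕ) (f : EuclideanSpace ℝ (Fin n) → ℝ)
    (hf : ConvexOn ℝ Set.univ f) (xk z : EuclideanSpace ℝ (Fin n)) (hne : xk ≠ z)
    (ε : ℝ) (gt : EuclideanSpace ℝ (Fin n))
    (hdist : Metric.infDist gt {g : EuclideanSpace ℝ (Fin n) | ∀ y, f y ≥ f xk + ⟪g, y - xk⟫} < ε)
    (Ek : ℝ) (hEk : Ek = f xk + ⟪gt, z - xk⟫ - f z) (hEkpos : 0 < Ek)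
    (g : EuclideanSpace ℝ (Fin n)) (hg : g = gt - (Ek / ‖z - xk‖ ^ 2) • (z - xk)) :
    Metric.infDist g {g : EuclideanSpace ℝ (Fin n) | ∀ y, f y ≥ f xk + ⟪g, y - xk⟫} < ε :=
  corrected_subgradient_close_general n f xk z ε gt hdist Ek hEk hEkpos g hg
end

section
/- Let f : ℝⁿ → ℝ be convex, z ∈ ℝⁿ, r > 0, ε ≥ 0. Let x* = Prox_f^r(z), and let φ be a convex function with x_{+} := Prox_φ^r(z) such that f(x) + ε‖x − x_{+}‖ ≥ φ(x_{+}) + r(z − x_{+})ᵀ(x − x_{+}) for all x. Then ‖x* − x_{+}‖ ≤ sqrt( (f(x_{+}) − φ(x_{+}) + ε²/(4r)) / r ) + ε/(2r). -/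
/-!
The subgradient inequality of the exact proximal point, evaluated at `xp`, and the approximate
model inequality, evaluated at `xs`, add up (their inner products combine to `‖xs - xp‖²`) to
`r d² - ε d ≤ f xp - φ xp` for `d = ‖xs - xp‖`; completing the square bounds `d`.
-/

open Set Filter Topology
open scoped RealInnerProductSpace

lemma le_of_forall_mem_Ioc_le_add_mul {a b c : ℝ} (h : ∀ t ∈ Ioc (0 : ℝ) 1, a ≤ b + c * t) :
    a ≤ b := by
  have hlim : Tendsto (fun t => b + c * t) (𝓝[>] 0) (𝓝 b) := by
    have : Tendsto (fun t => b + c * t) (𝓝 0) (𝓝 b) :=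
      (continuous_const.add (continuous_const.mul continuous_id)).tendsto' 0 b (by simp)
    exact this.mono_left nhdsWithin_le_nhds
  exact ge_of_tendsto hlim (eventually_of_mem (Ioc_mem_nhdsGT one_pos) h)

lemma le_sqrt_add_of_mul_sq_sub_le {r ε c d : ℝ} (hr : 0 < r) (h : r * d ^ 2 - ε * d ≤ c) :
    d ≤ √((c + ε ^ 2 / (4 * r)) / r) + ε / (2 * r) := by
  have hsq : (d - ε / (2 * r)) ^ 2 ≤ (c + ε ^ 2 / (4 * r)) / r := by
    rw [le_div_iff₀ hr]
    have : (d - ε / (2 * r)) ^ 2 * r = r * d ^ 2 - ε * d + ε ^ 2 / (4 * r) := by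
      field_simp
      ring
    linarith
  linarith [le_abs_self (d - ε / (2 * r)), Real.abs_le_sqrt hsq]

variable {E : Type*} [NormedAddCommGroup E] [InnerProductSpace ℝ E]

lemma ConvexOn.add_inner_le_of_prox {f : E → ℝ} (hf : ConvexOn ℝ univ f) {r : ℝ} {z x : E}
    (hx : ∀ y, f x + r / 2 * ‖x - z‖ ^ 2 ≤ f y + r / 2 * ‖y - z‖ ^ 2) (y : E) :
    f x + r * ⟪z - x, y - x⟫ ≤ f y := by
  -- Compare `x` with the point `(1 - t) • x + t • y`, divide by `t` and let `t → 0⁺`.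
  refine le_of_forall_mem_Ioc_le_add_mul (c := r / 2 * ‖y - x‖ ^ 2) fun t ⟨ht0, ht1⟩ => ?_
  have hconv : f ((1 - t) • x + t • y) ≤ (1 - t) * f x + t * f y :=
    hf.2 (mem_univ x) (mem_univ y) (by linarith) ht0.le (by ring)
  have hnorm : ‖(1 - t) • x + t • y - z‖ ^ 2
      = ‖x - z‖ ^ 2 - 2 * t * ⟪z - x, y - x⟫ + t ^ 2 * ‖y - x‖ ^ 2 := by
    rw [show (1 - t) • x + t • y - z = (x - z) + t • (y - x) by module, norm_add_sq_real,
      real_inner_smul_right, norm_smul, mul_pow, Real.norm_eq_abs, sq_abs,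
      show x - z = -(z - x) by abel, inner_neg_left, norm_neg]
    ring
  have hmin := hx ((1 - t) • x + t • y)
  rw [hnorm] at hmin
  refine le_of_mul_le_mul_left ?_ ht0
  linear_combination hmin + hconv

theorem dist_bound_general (n : ℕ) (f φ : EuclideanSpace ℝ (Fin n) → ℝ)
    (hf : ConvexOn ℝ Set.univ f)
    (r ε : ℝ) (hr : 0 < r) (z xs xp : EuclideanSpace ℝ (Fin n))
    (hxs : ∀ y, f xs + r / 2 * ‖xs - z‖ ^ 2 ≤ f y + r / 2 * ‖y - z‖ ^ 2)
    (htiger : ∀ x, f x + ε * ‖x - xp‖ ≥ φ xp + r * ⟪z - xp, x - xp⟫) :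
    ‖xs - xp‖ ≤ Real.sqrt ((f xp - φ xp + ε ^ 2 / (4 * r)) / r) + ε / (2 * r) := by
  have hsub := hf.add_inner_le_of_prox hxs xp
  have hmodel := htiger xs
  have hinner : ⟪z - xs, xp - xs⟫ + ⟪z - xp, xs - xp⟫ = ‖xs - xp‖ ^ 2 := by
    rw [← real_inner_self_eq_norm_sq, show xp - xs = -(xs - xp) by abel, inner_neg_right,
      show z - xp = (z - xs) + (xs - xp) by abel, inner_add_left]
    ring
  refine le_sqrt_add_of_mul_sq_sub_le hr ?_
  linear_combination hsub + hmodel - r * hinner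

theorem dist_bound (n : ℕ) (f φ : EuclideanSpace ℝ (Fin n) → ℝ)
    (hf : ConvexOn ℝ Set.univ f) (hφ : ConvexOn ℝ Set.univ φ)
    (r ε : ℝ) (hr : 0 < r) (hε : 0 ≤ ε) (z xs xp : EuclideanSpace ℝ (Fin n))
    (hxs : ∀ y, f xs + r / 2 * ‖xs - z‖ ^ 2 ≤ f y + r / 2 * ‖y - z‖ ^ 2)
    (hxp : ∀ y, φ xp + r / 2 * ‖xp - z‖ ^ 2 ≤ φ y + r / 2 * ‖y - z‖ ^ 2)
    (htiger : ∀ x, f x + ε * ‖x - xp‖ ≥ φ xp + r * ⟪z - xp, x - xp⟫) :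
    ‖xs - xp‖ ≤ Real.sqrt ((f xp - φ xp + ε ^ 2 / (4 * r)) / r) + ε / (2 * r) :=
  dist_bound_general n f φ hf r ε hr z xs xp hxs htiger
end

section
/- Suppose x_{+} ∈ ℝⁿ satisfies f(x_{+}) ≤ φ(x_{+}), where φ is a model satisfying the approximate inequality f(x) + ε‖x − x_{+}‖ ≥ φ(x_{+}) + r(z − x_{+})ᵀ(x − x_{+}) for all x, and x_{+} = Prox_φ^r(z). Then ‖x_{+} − x*‖ ≤ ε/r, where x* = Prox_f^r(z). -/
open scoped RealInnerProductSpace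
open Set Filter Topology

/-!
Optimality of `xs = prox_f^r z` makes `r • (z - xs)` a subgradient of `f` at `xs`, so
`f xs + r⟪z - xs, xp - xs⟫ ≤ f xp`. The model inequality at `xs`, with `f xp ≤ φ xp`, gives
`f xp + r⟪z - xp, xs - xp⟫ ≤ f xs + ε‖xs - xp‖`. Adding the two, the inner products sum to
`r‖xp - xs‖²`, hence `r‖xp - xs‖² ≤ ε‖xp - xs‖`.
-/

lemma nonneg_of_forall_mem_Ioc_nonneg_add_mul {a b : ℝ}
    (h : ∀ t ∈ Ioc (0 : ℝ) 1, 0 ≤ a + t * b) : 0 ≤ a := by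
  have hlim : Tendsto (fun t : ℝ => a + t * b) (𝓝[>] 0) (𝓝 a) := by
    have hcont : Continuous fun t : ℝ => a + t * b := by fun_prop
    simpa using (hcont.tendsto 0).mono_left nhdsWithin_le_nhds
  exact ge_of_tendsto hlim (eventually_of_mem (Ioc_mem_nhdsGT zero_lt_one) h)

section InnerProductSpace

variable {E : Type*} [NormedAddCommGroup E] [InnerProductSpace ℝ E]

lemma inner_sub_sub_add_inner_sub_sub (a b c : E) :
    ⟪c - a, b - a⟫ + ⟪c - b, a - b⟫ = ‖a - b‖ ^ 2 := by
  have hab : a - b = -(b - a) := (neg_sub b a).symm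
  rw [hab, inner_neg_right, ← sub_eq_add_neg, ← inner_sub_left, sub_sub_sub_cancel_left,
    norm_neg, real_inner_self_eq_norm_sq]

lemma ConvexOn.add_inner_le_of_isMinOn_prox {f : E → ℝ} (hf : ConvexOn ℝ univ f) {r : ℝ}
    {z x : E} (hx : IsMinOn (fun y => f y + r / 2 * ‖y - z‖ ^ 2) univ x) (y : E) :
    f x + r * ⟪z - x, y - x⟫ ≤ f y := by
  -- compare `x` with `(1 - t) • x + t • y` and let `t → 0⁺`
  rw [← sub_nonneg]
  refine nonneg_of_forall_mem_Ioc_nonneg_add_mul (b := r / 2 * ‖y - x‖ ^ 2) ?_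
  rintro t ⟨ht0, ht1⟩
  have hconv : f ((1 - t) • x + t • y) ≤ (1 - t) * f x + t * f y :=
    hf.2 (mem_univ x) (mem_univ y) (by linarith) ht0.le (by ring)
  have hmin := isMinOn_univ_iff.mp hx ((1 - t) • x + t • y)
  have hnorm : ‖(1 - t) • x + t • y - z‖ ^ 2
      = ‖x - z‖ ^ 2 - 2 * t * ⟪z - x, y - x⟫ + t ^ 2 * ‖y - x‖ ^ 2 := by
    have hsplit : (1 - t) • x + t • y - z = (x - z) + t • (y - x) := by module
    rw [hsplit, norm_add_sq_real, real_inner_smul_right, norm_smul, mul_pow, Real.norm_eq_abs,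
      sq_abs, ← neg_sub z x, inner_neg_left]
    ring
  simp only [hnorm] at hmin
  refine nonneg_of_mul_nonneg_right ?_ ht0
  nlinarith

end InnerProductSpace

theorem dist_bound_eps_over_r_general (n : ℕ) (f φ : EuclideanSpace ℝ (Fin n) → ℝ)
    (hf : ConvexOn ℝ Set.univ f)
    (r ε : ℝ) (hr : 0 < r) (hε : 0 ≤ ε) (z xs xp : EuclideanSpace ℝ (Fin n))
    (hxs : ∀ y, f xs + r / 2 * ‖xs - z‖ ^ 2 ≤ f y + r / 2 * ‖y - z‖ ^ 2)
    (htiger : ∀ x, f x + ε * ‖x - xp‖ ≥ φ xp + r * ⟪z - xp, x - xp⟫)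
    (hle : f xp ≤ φ xp) :
    ‖xp - xs‖ ≤ ε / r := by
  have hopt := hf.add_inner_le_of_isMinOn_prox (isMinOn_univ_iff.mpr hxs) xp
  have hmodel := htiger xs
  have hsq : r * ‖xp - xs‖ ^ 2 ≤ ε * ‖xp - xs‖ := by
    rw [← inner_sub_sub_add_inner_sub_sub xp xs z]
    rw [norm_sub_rev] at hmodel
    linarith
  rcases (norm_nonneg (xp - xs)).eq_or_lt with h0 | hpos
  · rw [← h0]
    positivity
  · rw [le_div_iff₀' hr]
    exact le_of_mul_le_mul_right (by linarith) hpos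

theorem dist_bound_eps_over_r (n : ℕ) (f φ : EuclideanSpace ℝ (Fin n) → ℝ)
    (hf : ConvexOn ℝ Set.univ f) (hφ : ConvexOn ℝ Set.univ φ)
    (r ε : ℝ) (hr : 0 < r) (hε : 0 ≤ ε) (z xs xp : EuclideanSpace ℝ (Fin n))
    (hxs : ∀ y, f xs + r / 2 * ‖xs - z‖ ^ 2 ≤ f y + r / 2 * ‖y - z‖ ^ 2)
    (hxp : ∀ y, φ xp + r / 2 * ‖xp - z‖ ^ 2 ≤ φ y + r / 2 * ‖y - z‖ ^ 2)
    (htiger : ∀ x, f x + ε * ‖x - xp‖ ≥ φ xp + r * ⟪z - xp, x - xp⟫)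
    (hle : f xp ≤ φ xp) :
    ‖xp - xs‖ ≤ ε / r :=
  dist_bound_eps_over_r_general n f φ hf r ε hr hε z xs xp hxs htiger hle
end

section
/- Let φ_k, φ_{k+1} : ℝⁿ → ℝ be convex, r > 0, z ∈ ℝⁿ, x_{k+1} := Prox_{φ_k}^r(z), x_{k+2} := Prox_{φ_{k+1}}^r(z), and suppose φ_{k+1}(x) ≥ φ_k(x_{k+1}) + r(z − x_{k+1})ᵀ(x − x_{k+1}) for all x. Then Φ(k+1) ≥ Φ(k) + (r/2)‖x_{k+2} − x_{k+1}‖², where Φ(j) := φ_j(x_{j+1}) + (r/2)‖z − x_{j+1}‖². -/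
open scoped RealInnerProductSpace

theorem le_add_half_norm_sub_sq_of_affine_le {E : Type*} [NormedAddCommGroup E]
    [InnerProductSpace ℝ E] {f : E → ℝ} {c r : ℝ} {z x₀ : E}
    (hf : ∀ x, c + r * ⟪z - x₀, x - x₀⟫ ≤ f x) (x : E) :
    c + r / 2 * ‖z - x₀‖ ^ 2 + r / 2 * ‖x - x₀‖ ^ 2 ≤ f x + r / 2 * ‖z - x‖ ^ 2 := by
  rw [← sub_sub_sub_cancel_right z x x₀, norm_sub_sq_real (z - x₀)]
  linarith [hf x]

theorem Phi_increase_general (n : ℕ) (φk φk1 : EuclideanSpace ℝ (Fin n) → ℝ)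
    (r : ℝ) (z x1 x2 : EuclideanSpace ℝ (Fin n))
    (hagg : ∀ x, φk1 x ≥ φk x1 + r * ⟪z - x1, x - x1⟫) :
    φk1 x2 + r / 2 * ‖z - x2‖ ^ 2 ≥
      (φk x1 + r / 2 * ‖z - x1‖ ^ 2) + r / 2 * ‖x2 - x1‖ ^ 2 :=
  le_add_half_norm_sub_sq_of_affine_le hagg x2

theorem Phi_increase (n : ℕ) (φk φk1 : EuclideanSpace ℝ (Fin n) → ℝ)
    (hφk : ConvexOn ℝ Set.univ φk) (hφk1 : ConvexOn ℝ Set.univ φk1)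
    (r : ℝ) (hr : 0 < r) (z x1 x2 : EuclideanSpace ℝ (Fin n))
    (hx1 : ∀ y, φk x1 + r / 2 * ‖x1 - z‖ ^ 2 ≤ φk y + r / 2 * ‖y - z‖ ^ 2)
    (hx2 : ∀ y, φk1 x2 + r / 2 * ‖x2 - z‖ ^ 2 ≤ φk1 y + r / 2 * ‖y - z‖ ^ 2)
    (hagg : ∀ x, φk1 x ≥ φk x1 + r * ⟪z - x1, x - x1⟫) :
    φk1 x2 + r / 2 * ‖z - x2‖ ^ 2 ≥
      (φk x1 + r / 2 * ‖z - x1‖ ^ 2) + r / 2 * ‖x2 - x1‖ ^ 2 :=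
  Phi_increase_general n φk φk1 r z x1 x2 hagg
end
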